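/- arXiv:2210.10269 — 3 statements merged into one kernel-verified Lean document; each statement's English description precedes it below -/
import Mathlib

section
/- Let a, b ∈ ℝ^n with a majorized by b (i.e., when both are sorted in decreasing order, every partial sum of a is at most the corresponding partial sum of b, with equality for the total sums). Suppose there exists a strictly convex function Φ : ℝ → ℝ such that ∑_{i=1}^n Φ(a_i) = ∑_{i=1}^n Φ(b_i). Then a is a permutation of b. -/
/-- Decreasing rearrangement of a finite real vector. -/
noncomputable def sortDesc {n : ℕ} (a : Fin n → ℝ) : Fin n → ℝ :=
  fun i => a (Tuple.sort a i.rev)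

/-- Sum of the `k` largest entries of `a`. -/
noncomputable def topSum {n : ℕ} (a : Fin n → ℝ) (k : ℕ) : ℝ :=
  ∑ i : Fin n, if (i : ℕ) < k then sortDesc a i else 0

/-- Product of the `k` largest entries of `a`. -/
noncomputable def topProd {n : ℕ} (a : Fin n → ℝ) (k : ℕ) : ℝ :=
  ∏ i : Fin n, if (i : ℕ) < k then sortDesc a i else 1

/-- `a ≺ b`: majorization of real vectors. -/
def Majorizes {n : ℕ} (a b : Fin n → ℝ) : Prop :=
  (∀ k : ℕ, k ≤ n → topSum a k ≤ topSum b k) ∧ ∑ i, a i = ∑ i, b i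

/-- `a ≺_w b`: weak majorization of real vectors. -/
def WeakMajorizes {n : ℕ} (a b : Fin n → ℝ) : Prop :=
  ∀ k : ℕ, k ≤ n → topSum a k ≤ topSum b k

/-- `a ≺_{log} b`: log-majorization of positive vectors. -/
def LogMajorizes {n : ℕ} (a b : Fin n → ℝ) : Prop :=
  (∀ k : ℕ, k ≤ n → topProd a k ≤ topProd b k) ∧ ∏ i, a i = ∏ i, b i

/- ### Auxiliary lemmas -/

private lemma slope_sym (f : ℝ → ℝ) (u v : ℝ) :
    (f v - f u) / (v - u) = (f u - f v) / (u - v) := by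
  rw [← neg_sub (f v), ← neg_sub v, neg_div_neg_eq]

private lemma slope_le {Φ : ℝ → ℝ} (hΦ : ConvexOn ℝ Set.univ Φ) {p q p' q' : ℝ}
    (h1 : p < q) (h2 : p' < q') (hp : p ≤ p') (hq : q ≤ q') :
    (Φ q - Φ p) / (q - p) ≤ (Φ q' - Φ p') / (q' - p') := by
  have A : (Φ q - Φ p) / (q - p) ≤ (Φ q' - Φ p) / (q' - p) :=
    hΦ.secant_mono (Set.mem_univ _) (Set.mem_univ _) (Set.mem_univ _)
      (ne_of_gt h1) (ne_of_gt (lt_of_lt_of_le h1 hq)) hq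
  have B : (Φ p - Φ q') / (p - q') ≤ (Φ p' - Φ q') / (p' - q') :=
    hΦ.secant_mono (Set.mem_univ _) (Set.mem_univ _) (Set.mem_univ _)
      (ne_of_lt (lt_of_lt_of_le h1 hq)) (ne_of_lt h2) hp
  rw [slope_sym Φ q' p, slope_sym Φ q' p'] at B
  linarith

private lemma slope_lt {Φ : ℝ → ℝ} (hΦ : StrictConvexOn ℝ Set.univ Φ) {p q p' q' : ℝ}
    (h1 : p < q) (h2 : q ≤ p') (h3 : p' < q') :
    (Φ q - Φ p) / (q - p) < (Φ q' - Φ p') / (q' - p') := by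
  have hqq : q < q' := lt_of_le_of_lt h2 h3
  have A : (Φ q - Φ p) / (q - p) < (Φ q' - Φ p) / (q' - p) :=
    hΦ.secant_strict_mono (Set.mem_univ _) (Set.mem_univ _) (Set.mem_univ _)
      (ne_of_gt h1) (ne_of_gt (h1.trans hqq)) hqq
  have B : (Φ q' - Φ p) / (q' - p) ≤ (Φ q' - Φ p') / (q' - p') :=
    slope_le hΦ.convexOn (h1.trans hqq) h3 (h1.le.trans h2) le_rfl
  linarith

private lemma slope_minmax (Φ : ℝ → ℝ) {u v : ℝ} (h : u ≠ v) :
    (Φ v - Φ u) / (v - u) = (Φ (max u v) - Φ (min u v)) / (max u v - min u v) := by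
  rcases h.lt_or_gt with hlt | hlt
  · rw [max_eq_right hlt.le, min_eq_left hlt.le]
  · rw [max_eq_left hlt.le, min_eq_right hlt.le, slope_sym]

private lemma antitone_range {n : ℕ} (x : ℕ → ℝ)
    (hx : ∀ i, i + 1 < n → x (i + 1) ≤ x i) :
    ∀ i l, i ≤ l → l < n → x l ≤ x i := by
  intro i l hil hl
  induction l with
  | zero => obtain rfl : i = 0 := Nat.le_zero.mp hil; exact le_rfl
  | succ k ih =>
    rcases Nat.lt_or_ge i (k + 1) with h | h
    · exact (hx k hl).trans (ih (by omega) (by omega))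
    · obtain rfl : i = k + 1 := le_antisymm hil h; exact le_rfl

private lemma abel_pos (n : ℕ) (c d : ℕ → ℝ)
    (hc : ∀ i, i + 1 < n → c (i + 1) ≤ c i)
    (hP : ∀ k, k ≤ n → 0 ≤ ∑ i ∈ Finset.range k, d i)
    (hPn : ∑ i ∈ Finset.range n, d i = 0)
    (j m : ℕ) (hjm : j < m) (hm : m < n)
    (hcm : c m < c j) (δ : ℝ) (hδ : 0 < δ)
    (hPd : ∀ k, j < k → k ≤ m → δ ≤ ∑ i ∈ Finset.range k, d i) :
    0 < ∑ i ∈ Finset.range n, c i * d i := by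
  have h1 : ∑ i ∈ Finset.range n, c i * d i
      = ∑ i ∈ Finset.range (n - 1), (c i - c (i + 1)) * (∑ k ∈ Finset.range (i + 1), d k) := by
    have habel := Finset.sum_range_by_parts c d n
    simp only [smul_eq_mul] at habel
    rw [habel, hPn, mul_zero, zero_sub, ← Finset.sum_neg_distrib]
    exact Finset.sum_congr rfl (fun i _ => by ring)
  rw [h1]
  have hlow : ∀ i ∈ Finset.range (n - 1),
      (if j ≤ i ∧ i < m then (c i - c (i + 1)) * δ else 0)
        ≤ (c i - c (i + 1)) * (∑ k ∈ Finset.range (i + 1), d k) := by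
    intro i hi
    have hin : i + 1 < n := by
      simp only [Finset.mem_range] at hi; omega
    have hcc : 0 ≤ c i - c (i + 1) := by have := hc i hin; linarith
    split_ifs with h
    · exact mul_le_mul_of_nonneg_left (hPd (i + 1) (by omega) (by omega)) hcc
    · exact mul_nonneg hcc (hP (i + 1) (by omega))
  have tele : ∀ M, j ≤ M → ∑ i ∈ Finset.Ico j M, (c i - c (i + 1)) = c j - c M := by
    intro M hM
    induction M, hM using Nat.le_induction with
    | base => simp
    | succ M hM ih => rw [Finset.sum_Ico_succ_top hM, ih]; ring
  have hsumlow : ∑ i ∈ Finset.range (n - 1),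
      (if j ≤ i ∧ i < m then (c i - c (i + 1)) * δ else 0) = (c j - c m) * δ := by
    rw [← Finset.sum_filter]
    have hfe : (Finset.range (n - 1)).filter (fun i => j ≤ i ∧ i < m) = Finset.Ico j m := by
      ext i
      simp only [Finset.mem_filter, Finset.mem_range, Finset.mem_Ico]
      omega
    rw [hfe, ← Finset.sum_mul, tele m hjm.le]
  calc (0 : ℝ) < (c j - c m) * δ := mul_pos (by linarith) hδ
    _ = ∑ i ∈ Finset.range (n - 1),
        (if j ≤ i ∧ i < m then (c i - c (i + 1)) * δ else 0) := hsumlow.symm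
    _ ≤ _ := Finset.sum_le_sum hlow

private lemma key_eq {n : ℕ} (x y : ℕ → ℝ) (Φ : ℝ → ℝ)
    (hΦ : StrictConvexOn ℝ Set.univ Φ)
    (hx : ∀ i, i + 1 < n → x (i + 1) ≤ x i)
    (hy : ∀ i, i + 1 < n → y (i + 1) ≤ y i)
    (hk : ∀ k, k ≤ n → ∑ i ∈ Finset.range k, x i ≤ ∑ i ∈ Finset.range k, y i)
    (htot : ∑ i ∈ Finset.range n, x i = ∑ i ∈ Finset.range n, y i)
    (hfsum : ∑ i ∈ Finset.range n, Φ (x i) = ∑ i ∈ Finset.range n, Φ (y i)) :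
    ∀ i, i < n → x i = y i := by
  classical
  by_contra hne
  push_neg at hne
  obtain ⟨i0, hi0n, hi0⟩ := hne
  have hex : ∃ i, i < n ∧ x i ≠ y i := ⟨i0, hi0n, hi0⟩
  set j := Nat.find hex with hjdef
  obtain ⟨hjn, hjne⟩ : j < n ∧ x j ≠ y j := Nat.find_spec hex
  have hjmin : ∀ i, i < j → i < n → x i = y i := by
    intro i hij hin
    by_contra h
    exact Nat.find_min hex hij ⟨hin, h⟩
  -- x j < y j
  have hprefj : ∀ k, k ≤ j → ∑ i ∈ Finset.range k, x i = ∑ i ∈ Finset.range k, y i := by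
    intro k hkj
    exact Finset.sum_congr rfl (fun i hi => by
      simp only [Finset.mem_range] at hi
      exact hjmin i (by omega) (by omega))
  have hxyj : x j < y j := by
    have h1 := hk (j + 1) (by omega)
    rw [Finset.sum_range_succ, Finset.sum_range_succ, hprefj j le_rfl] at h1
    have : x j ≤ y j := by linarith
    exact lt_of_le_of_ne this hjne
  -- existence of m with y m < x m
  have hexm : ∃ i, i < n ∧ y i < x i := by
    by_contra h
    push_neg at h
    have hlt : ∑ i ∈ Finset.range n, x i < ∑ i ∈ Finset.range n, y i := by
      refine Finset.sum_lt_sum (fun i hi => ?_) ⟨j, Finset.mem_range.mpr hjn, hxyj⟩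
      simp only [Finset.mem_range] at hi
      exact le_of_not_gt (fun hc => absurd (h i hi) (not_le.mpr hc))
    exact absurd htot hlt.ne
  set m := Nat.find hexm with hmdef
  obtain ⟨hmn, hym⟩ : m < n ∧ y m < x m := Nat.find_spec hexm
  have hmmin : ∀ i, i < m → i < n → x i ≤ y i := by
    intro i him hin
    by_contra h
    exact Nat.find_min hexm him ⟨hin, not_le.mp h⟩
  have hjm : j < m := by
    rcases lt_trichotomy j m with h | h | h
    · exact h
    · exact absurd (h ▸ hxyj) (asymm hym)
    · exact absurd (hjmin m h hmn) (ne_of_gt hym)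
  -- antitone over ranges
  have hxm := antitone_range x hx
  have hym' := antitone_range y hy
  -- slope function
  set c : ℕ → ℝ := fun l => (Φ (y l) - Φ (x l)) / (y l - x l) with hcdef
  have hcmono : ∀ l' l, l' ≤ l → l < n → x l' ≠ y l' → x l ≠ y l → c l ≤ c l' := by
    intro l' l hll hln hne' hnel
    have hl'n : l' < n := lt_of_le_of_lt hll hln
    have e1 := slope_minmax Φ hnel
    have e2 := slope_minmax Φ hne'
    rw [hcdef]
    simp only
    rw [e1, e2]
    exact slope_le hΦ.convexOn (min_lt_max.mpr hnel) (min_lt_max.mpr hne')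
      (min_le_min (hxm l' l hll hln) (hym' l' l hll hln))
      (max_le_max (hxm l' l hll hln) (hym' l' l hll hln))
  -- the monotone extension of c
  set D : ℕ → Finset ℕ :=
    fun i => insert j ((Finset.range (i + 1)).filter (fun l => x l ≠ y l)) with hDdef
  have hDne : ∀ i, (D i).Nonempty := fun i => Finset.insert_nonempty _ _
  set cb : ℕ → ℝ := fun i => (D i).inf' (hDne i) c with hcbdef
  have hcb_anti : ∀ i, i + 1 < n → cb (i + 1) ≤ cb i := by
    intro i _
    refine Finset.inf'_mono c ?_ (hDne i)
    intro l hl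
    simp only [hDdef, Finset.mem_insert, Finset.mem_filter, Finset.mem_range] at hl ⊢
    rcases hl with h | ⟨h1, h2⟩
    · exact Or.inl h
    · exact Or.inr ⟨by omega, h2⟩
  have hcb_eq : ∀ l, l < n → x l ≠ y l → cb l = c l := by
    intro l hln hnel
    have hjl : j ≤ l := Nat.find_min' hex ⟨hln, hnel⟩
    apply le_antisymm
    · exact Finset.inf'_le c (by
        simp only [hDdef, Finset.mem_insert, Finset.mem_filter, Finset.mem_range]
        exact Or.inr ⟨by omega, hnel⟩)
    · refine Finset.le_inf' _ _ (fun b hb => ?_)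
      simp only [hDdef, Finset.mem_insert, Finset.mem_filter, Finset.mem_range] at hb
      rcases hb with rfl | ⟨hb1, hb2⟩
      · exact hcmono j l hjl hln hjne hnel
      · exact hcmono b l (by omega) hln hb2 hnel
  -- c m < c j
  have hcmj : c m < c j := by
    have e2 : c m = (Φ (x m) - Φ (y m)) / (x m - y m) := slope_sym Φ (x m) (y m)
    rw [hcdef]
    simp only
    rw [show (Φ (y m) - Φ (x m)) / (y m - x m) = (Φ (x m) - Φ (y m)) / (x m - y m) from
      slope_sym Φ (x m) (y m)]
    exact slope_lt hΦ hym (hxm j m hjm.le hmn) hxyj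
  -- setup for abel
  set d : ℕ → ℝ := fun i => y i - x i with hddef
  have hP : ∀ k, k ≤ n → 0 ≤ ∑ i ∈ Finset.range k, d i := by
    intro k hkn
    have := hk k hkn
    simp only [hddef, Finset.sum_sub_distrib]
    linarith
  have hPn : ∑ i ∈ Finset.range n, d i = 0 := by
    simp only [hddef, Finset.sum_sub_distrib]
    linarith
  set δ : ℝ := y j - x j with hδdef
  have hδ : 0 < δ := by simp only [hδdef]; linarith
  have hPd : ∀ k, j < k → k ≤ m → δ ≤ ∑ i ∈ Finset.range k, d i := by
    intro k hjk hkm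
    have hsplit : ∑ i ∈ Finset.range (j + 1), d i + ∑ i ∈ Finset.Ico (j + 1) k, d i
        = ∑ i ∈ Finset.range k, d i := Finset.sum_range_add_sum_Ico d (by omega)
    have h0 : ∑ i ∈ Finset.range (j + 1), d i = δ := by
      rw [Finset.sum_range_succ]
      have : ∑ i ∈ Finset.range j, d i = 0 := by
        apply Finset.sum_eq_zero
        intro i hi
        simp only [Finset.mem_range] at hi
        simp only [hddef, hjmin i hi (by omega), sub_self]
      rw [this, zero_add]
    have h2 : 0 ≤ ∑ i ∈ Finset.Ico (j + 1) k, d i := by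
      apply Finset.sum_nonneg
      intro i hi
      simp only [Finset.mem_Ico] at hi
      have := hmmin i (by omega) (by omega)
      simp only [hddef]
      linarith
    linarith
  have habel := abel_pos n cb d hcb_anti hP hPn j m hjm hmn
    (by rw [hcb_eq m hmn (ne_of_gt hym), hcb_eq j hjn hjne]; exact hcmj) δ hδ hPd
  have hzero : ∑ i ∈ Finset.range n, cb i * d i = 0 := by
    have hpt : ∀ i ∈ Finset.range n, cb i * d i = Φ (y i) - Φ (x i) := by
      intro i hi
      simp only [Finset.mem_range] at hi
      by_cases h : x i = y i
      · simp [hddef, h]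
      · rw [hcb_eq i hi h, hcdef, hddef]
        simp only
        rw [div_mul_cancel₀]
        exact sub_ne_zero.mpr (Ne.symm h)
    rw [Finset.sum_congr rfl hpt, Finset.sum_sub_distrib]
    linarith
  rw [hzero] at habel
  exact lt_irrefl 0 habel

theorem stmt_0 {n : ℕ} (a b : Fin n → ℝ) (hmaj : Majorizes a b)
    (Φ : ℝ → ℝ) (hΦ : StrictConvexOn ℝ Set.univ Φ)
    (hsum : ∑ i, Φ (a i) = ∑ i, Φ (b i)) :
    ∃ σ : Equiv.Perm (Fin n), a = b ∘ σ := by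
  classical
  set τa : Equiv.Perm (Fin n) := Fin.revPerm.trans (Tuple.sort a) with hτa
  set τb : Equiv.Perm (Fin n) := Fin.revPerm.trans (Tuple.sort b) with hτb
  have hsa : ∀ i, sortDesc a i = a (τa i) := fun i => rfl
  have hsb : ∀ i, sortDesc b i = b (τb i) := fun i => rfl
  -- antitonicity of sortDesc
  have hanti : ∀ (f : Fin n → ℝ) (i j : Fin n), i ≤ j → sortDesc f j ≤ sortDesc f i := by
    intro f i j hij
    exact Tuple.monotone_sort f (show j.rev ≤ i.rev from Fin.rev_le_rev.mpr hij)
  -- ℕ-valued versions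
  set X : ℕ → ℝ := fun i => if h : i < n then sortDesc a ⟨i, h⟩ else 0 with hX
  set Y : ℕ → ℝ := fun i => if h : i < n then sortDesc b ⟨i, h⟩ else 0 with hY
  have hXv : ∀ (i : Fin n), X i = sortDesc a i := by
    intro i; simp only [hX, dif_pos i.isLt, Fin.eta]
  have hYv : ∀ (i : Fin n), Y i = sortDesc b i := by
    intro i; simp only [hY, dif_pos i.isLt, Fin.eta]
  have htop : ∀ (f : Fin n → ℝ) (Z : ℕ → ℝ), (∀ (i : Fin n), Z i = sortDesc f i) →
      ∀ k, k ≤ n → topSum f k = ∑ i ∈ Finset.range k, Z i := by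
    intro f Z hZ k hkn
    have e1 : topSum f k = ∑ i : Fin n, (fun (l : ℕ) => if l < k then Z l else 0) (i : ℕ) := by
      refine Finset.sum_congr rfl (fun i _ => ?_)
      simp only [hZ i]
    rw [e1, Fin.sum_univ_eq_sum_range (fun l => if l < k then Z l else 0) n]
    rw [← Finset.sum_filter]
    congr 1
    ext i
    simp only [Finset.mem_filter, Finset.mem_range]
    omega
  have htopX := htop a X hXv
  have htopY := htop b Y hYv
  -- hypotheses of key_eq
  have hxstep : ∀ i, i + 1 < n → X (i + 1) ≤ X i := by
    intro i hi
    rw [show X (i+1) = sortDesc a ⟨i+1, hi⟩ from by simp only [hX, dif_pos hi],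
      show X i = sortDesc a ⟨i, by omega⟩ from by simp only [hX]; rw [dif_pos (by omega : i < n)]]
    exact hanti a ⟨i, by omega⟩ ⟨i + 1, hi⟩ (by simp [Fin.mk_le_mk])
  have hystep : ∀ i, i + 1 < n → Y (i + 1) ≤ Y i := by
    intro i hi
    rw [show Y (i+1) = sortDesc b ⟨i+1, hi⟩ from by simp only [hY, dif_pos hi],
      show Y i = sortDesc b ⟨i, by omega⟩ from by simp only [hY]; rw [dif_pos (by omega : i < n)]]
    exact hanti b ⟨i, by omega⟩ ⟨i + 1, hi⟩ (by simp [Fin.mk_le_mk])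
  have hk : ∀ k, k ≤ n → ∑ i ∈ Finset.range k, X i ≤ ∑ i ∈ Finset.range k, Y i := by
    intro k hkn
    rw [← htopX k hkn, ← htopY k hkn]
    exact hmaj.1 k hkn
  have hsumX : ∀ (g : ℝ → ℝ), ∑ i ∈ Finset.range n, g (X i) = ∑ i, g (a i) := by
    intro g
    rw [← Fin.sum_univ_eq_sum_range (fun l => g (X l)) n]
    calc ∑ i : Fin n, g (X i) = ∑ i : Fin n, g (a (τa i)) := by
          refine Finset.sum_congr rfl (fun i _ => ?_); rw [hXv i, hsa i]
      _ = ∑ i, g (a i) := Equiv.sum_comp τa (fun i => g (a i))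
  have hsumY : ∀ (g : ℝ → ℝ), ∑ i ∈ Finset.range n, g (Y i) = ∑ i, g (b i) := by
    intro g
    rw [← Fin.sum_univ_eq_sum_range (fun l => g (Y l)) n]
    calc ∑ i : Fin n, g (Y i) = ∑ i : Fin n, g (b (τb i)) := by
          refine Finset.sum_congr rfl (fun i _ => ?_); rw [hYv i, hsb i]
      _ = ∑ i, g (b i) := Equiv.sum_comp τb (fun i => g (b i))
  have htot : ∑ i ∈ Finset.range n, X i = ∑ i ∈ Finset.range n, Y i := by
    have hX' : ∑ i ∈ Finset.range n, X i = ∑ i, a i := by simpa using hsumX id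
    have hY' : ∑ i ∈ Finset.range n, Y i = ∑ i, b i := by simpa using hsumY id
    rw [hX', hY']; exact hmaj.2
  have hfsum : ∑ i ∈ Finset.range n, Φ (X i) = ∑ i ∈ Finset.range n, Φ (Y i) := by
    rw [hsumX Φ, hsumY Φ]; exact hsum
  have hXY := key_eq X Y Φ hΦ hxstep hystep hk htot hfsum
  -- conclude
  refine ⟨τa.symm.trans τb, funext fun i => ?_⟩
  have h1 : sortDesc a = sortDesc b := by
    funext l
    rw [← hXv l, ← hYv l]
    exact hXY l l.isLt
  have h2 : a (τa (τa.symm i)) = b (τb (τa.symm i)) := by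
    rw [← hsa, ← hsb, h1]
  simpa using h2
end

section
/- If a ∈ ℝ_{>0}^n is log-majorized by b ∈ ℝ_{>0}^n, then a is weakly majorized by b, i.e., each partial sum of the decreasing rearrangement of a is at most the corresponding partial sum for b. -/
/-!
Write `x` and `y` for the decreasing rearrangements of `a` and `b`, and `d i = log y i - log x i`.
Log-majorization says that the partial sums of `d` are nonnegative, so summation by parts against
the nonincreasing, nonnegative weights `x i` gives `0 ≤ ∑ x i * d i`. Since `log t ≤ t - 1`,
each term satisfies `x i * d i ≤ y i - x i`, and summing yields `∑ x i ≤ ∑ y i`.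
-/

open Finset

lemma sum_range_mul_nonneg_of_antitoneOn {c d : ℕ → ℝ} {k : ℕ}
    (hc : AntitoneOn c (Set.Iio k)) (hc_nonneg : ∀ i < k, 0 ≤ c i)
    (hd : ∀ j ≤ k, 0 ≤ ∑ i ∈ range j, d i) :
    0 ≤ ∑ i ∈ range k, c i * d i := by
  rcases Nat.eq_zero_or_pos k with rfl | hk
  · simp
  have hby_parts := sum_range_by_parts c d k
  simp only [smul_eq_mul] at hby_parts
  rw [hby_parts, sub_nonneg]
  calc ∑ i ∈ range (k - 1), (c (i + 1) - c i) * ∑ j ∈ range (i + 1), d j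
      ≤ 0 := by
        refine sum_nonpos fun i hi => mul_nonpos_of_nonpos_of_nonneg ?_ (hd _ ?_)
        · have hi : i + 1 < k := by simp at hi; omega
          exact sub_nonpos.2 (hc (by simp; omega) (by simpa using hi) (by omega))
        · simp at hi; omega
    _ ≤ c (k - 1) * ∑ j ∈ range k, d j := mul_nonneg (hc_nonneg _ (by omega)) (hd k le_rfl)

lemma mul_sub_log_le_sub {x y : ℝ} (hx : 0 < x) (hy : 0 < y) :
    x * (Real.log y - Real.log x) ≤ y - x := by
  have h := Real.log_le_sub_one_of_pos (div_pos hy hx)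
  rw [Real.log_div hy.ne' hx.ne'] at h
  calc x * (Real.log y - Real.log x) ≤ x * (y / x - 1) := mul_le_mul_of_nonneg_left h hx.le
    _ = y - x := by field_simp

theorem sum_range_le_of_prod_range_le {x y : ℕ → ℝ} {k : ℕ}
    (hx_anti : AntitoneOn x (Set.Iio k)) (hx : ∀ i < k, 0 < x i) (hy : ∀ i < k, 0 < y i)
    (hprod : ∀ j ≤ k, ∏ i ∈ range j, x i ≤ ∏ i ∈ range j, y i) :
    ∑ i ∈ range k, x i ≤ ∑ i ∈ range k, y i := by
  set d : ℕ → ℝ := fun i => Real.log (y i) - Real.log (x i)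
  have hd : ∀ j ≤ k, 0 ≤ ∑ i ∈ range j, d i := by
    intro j hj
    have hx' : ∀ i ∈ range j, 0 < x i := fun i hi => hx i (by simp at hi; omega)
    have hy' : ∀ i ∈ range j, 0 < y i := fun i hi => hy i (by simp at hi; omega)
    have hlog := Real.log_le_log (prod_pos hx') (hprod j hj)
    rw [Real.log_prod fun i hi => (hx' i hi).ne', Real.log_prod fun i hi => (hy' i hi).ne']
      at hlog
    simpa [d, sum_sub_distrib] using hlog
  have hweighted := sum_range_mul_nonneg_of_antitoneOn hx_anti (fun i hi => (hx i hi).le) hd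
  have hterm : ∑ i ∈ range k, x i * d i ≤ ∑ i ∈ range k, (y i - x i) :=
    sum_le_sum fun i hi => mul_sub_log_le_sub (hx i (by simpa using hi)) (hy i (by simpa using hi))
  rw [sum_sub_distrib] at hterm
  linarith

@[to_additive]
lemma Fin.prod_ite_lt_eq_prod_range {M : Type*} [CommMonoid M] {n k : ℕ} (hk : k ≤ n)
    (f : ℕ → M) : ∏ i : Fin n, (if (i : ℕ) < k then f i else 1) = ∏ i ∈ range k, f i := by
  rw [Fin.prod_univ_eq_prod_range (fun i => if i < k then f i else 1), ← prod_filter]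
  congr 1
  ext i
  simp only [mem_filter, mem_range]
  omega

noncomputable def sortDescSeq {n : ℕ} (a : Fin n → ℝ) (i : ℕ) : ℝ :=
  if h : i < n then sortDesc a ⟨i, h⟩ else 0

lemma sortDescSeq_coe {n : ℕ} (a : Fin n → ℝ) (i : Fin n) : sortDescSeq a i = sortDesc a i := by
  simp [sortDescSeq]

lemma sortDesc_antitone {n : ℕ} (a : Fin n → ℝ) : Antitone (sortDesc a) :=
  fun _ _ hij => Tuple.monotone_sort a (Fin.rev_le_rev.mpr hij)

lemma sortDescSeq_antitoneOn {n : ℕ} (a : Fin n → ℝ) : AntitoneOn (sortDescSeq a) (Set.Iio n) :=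
  fun i hi j hj hij => by
    simp only [Set.mem_Iio] at hi hj
    simp only [sortDescSeq, dif_pos hi, dif_pos hj]
    exact sortDesc_antitone a (Fin.mk_le_mk.2 hij)

lemma sortDescSeq_pos {n : ℕ} {a : Fin n → ℝ} (ha : ∀ i, 0 < a i) {i : ℕ} (hi : i < n) :
    0 < sortDescSeq a i := by
  simp only [sortDescSeq, dif_pos hi]
  exact ha _

lemma topSum_eq_sum_range {n k : ℕ} (a : Fin n → ℝ) (hk : k ≤ n) :
    topSum a k = ∑ i ∈ range k, sortDescSeq a i := by
  simp only [topSum, ← sortDescSeq_coe]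
  exact Fin.sum_ite_lt_eq_sum_range hk _

lemma topProd_eq_prod_range {n k : ℕ} (a : Fin n → ℝ) (hk : k ≤ n) :
    topProd a k = ∏ i ∈ range k, sortDescSeq a i := by
  simp only [topProd, ← sortDescSeq_coe]
  exact Fin.prod_ite_lt_eq_prod_range hk _

theorem stmt_2 {n : ℕ} (a b : Fin n → ℝ) (ha : ∀ i, 0 < a i) (hb : ∀ i, 0 < b i)
    (hmaj : LogMajorizes a b) : WeakMajorizes a b := by
  intro k hk
  rw [topSum_eq_sum_range a hk, topSum_eq_sum_range b hk]
  refine sum_range_le_of_prod_range_le ((sortDescSeq_antitoneOn a).mono (Set.Iio_subset_Iio hk))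
    (fun i hi => sortDescSeq_pos ha (by omega)) (fun i hi => sortDescSeq_pos hb (by omega))
    fun j hj => ?_
  rw [← topProd_eq_prod_range a (hj.trans hk), ← topProd_eq_prod_range b (hj.trans hk)]
  exact hmaj.1 j (hj.trans hk)
end

section
/- For positive definite n×n matrices A, B, C, the following are equivalent: (1) there exists an invertible X ∈ M_n(ℂ) such that XAX*, XBX*, XCX* pairwise commute; (2) A B^{-1} C = C B^{-1} A; (3) the matrices A^{-1/2} B A^{-1/2} and A^{-1/2} C A^{-1/2} commute. -/
open Matrix
open scoped ComplexOrder

/-- Matrix logarithm (via the continuous functional calculus for Hermitian matrices). -/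
noncomputable def mlog {n : ℕ} (A : Matrix (Fin n) (Fin n) ℂ) : Matrix (Fin n) (Fin n) ℂ :=
  cfc Real.log A

/-- Matrix exponential of a Hermitian matrix (via the continuous functional calculus). -/
noncomputable def mexp {n : ℕ} (A : Matrix (Fin n) (Fin n) ℂ) : Matrix (Fin n) (Fin n) ℂ :=
  cfc Real.exp A

/-- Real power of a positive definite matrix (via the continuous functional calculus). -/
noncomputable def mpow {n : ℕ} (A : Matrix (Fin n) (Fin n) ℂ) (t : ℝ) : Matrix (Fin n) (Fin n) ℂ :=
  cfc (fun x : ℝ => x ^ t) A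

/-- Schatten `p`-norm: `(∑ σ_i(X)^p)^(1/p)`, where `σ_i(X)^p = λ_i(XᴴX)^(p/2)`. -/
noncomputable def schatten {n : ℕ} (p : ℝ) (X : Matrix (Fin n) (Fin n) ℂ) : ℝ :=
  (∑ i, ((Matrix.posSemidef_conjTranspose_mul_self X).1.eigenvalues i) ^ (p / 2)) ^ (1 / p)

/-- Finsler geodesic distance `δ_p(A,B) = ‖log (A^{-1/2} B A^{-1/2})‖_p`. -/
noncomputable def deltap {n : ℕ} (p : ℝ) (A B : Matrix (Fin n) (Fin n) ℂ) : ℝ :=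
  schatten p (mlog (mpow A (-(1/2)) * B * mpow A (-(1/2))))

/-- Matrix geometric mean `A # B = A^{1/2} (A^{-1/2} B A^{-1/2})^{1/2} A^{1/2}`. -/
noncomputable def geomMean {n : ℕ} (A B : Matrix (Fin n) (Fin n) ℂ) : Matrix (Fin n) (Fin n) ℂ :=
  mpow A (1/2) * mpow (mpow A (-(1/2)) * B * mpow A (-(1/2))) (1/2) * mpow A (1/2)

/-- Decreasingly ordered eigenvalue vector of a Hermitian matrix. -/
noncomputable def eigsDesc {n : ℕ} {A : Matrix (Fin n) (Fin n) ℂ} (hA : A.IsHermitian) :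
    Fin n → ℝ :=
  fun i => hA.eigenvalues (Tuple.sort hA.eigenvalues i.rev)

/-!
Since `(X M Xᴴ) (X N Xᴴ) = X (M S N) Xᴴ` with `S = Xᴴ X`, congruence by an invertible `X` makes
`M` and `N` commute iff `M S N = N S M`. For `X = B^{-1/2}` we get `S = B⁻¹`, and the relations
with `B` hold trivially, so (2) gives (1). Conversely, `A S B = B S A` yields `S A B⁻¹ = B⁻¹ A S`,
so `S (A B⁻¹ C) = B⁻¹ (A S C)` is symmetric in `A` and `C`. As (1) is symmetric in `A` and `B`,
(2) is equivalent to `B A⁻¹ C = C A⁻¹ B`, which is (3) after congruence by `A^{-1/2}`.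
-/

namespace Matrix

variable {ι R : Type*} [Fintype ι] [DecidableEq ι] [CommRing R]

lemma mul_mul_inv_eq_inv_mul_mul {S A B : Matrix ι ι R} (hB : IsUnit B)
    (h : A * S * B = B * S * A) : S * A * B⁻¹ = B⁻¹ * A * S := by
  have hB' := (isUnit_iff_isUnit_det B).mp hB
  calc S * A * B⁻¹ = B⁻¹ * (B * S * A) * B⁻¹ := by
        rw [mul_assoc B, ← mul_assoc B⁻¹, nonsing_inv_mul B hB', one_mul]
    _ = B⁻¹ * A * S := by
        rw [← h, mul_assoc, mul_assoc (A * S), mul_nonsing_inv B hB', mul_one, mul_assoc]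

lemma mul_inv_mul_comm_of_twisted_comm {S A B C : Matrix ι ι R} (hS : IsUnit S)
    (hB : IsUnit B) (hAB : A * S * B = B * S * A) (hAC : A * S * C = C * S * A)
    (hCB : C * S * B = B * S * C) : A * B⁻¹ * C = C * B⁻¹ * A := by
  refine hS.mul_left_cancel ?_
  calc S * (A * B⁻¹ * C) = B⁻¹ * (A * S * C) := by
        rw [← mul_assoc, ← mul_assoc, mul_mul_inv_eq_inv_mul_mul hB hAB]
        simp only [mul_assoc]
    _ = S * (C * B⁻¹ * A) := by
        rw [hAC, ← mul_assoc, ← mul_assoc, ← mul_mul_inv_eq_inv_mul_mul hB hCB]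
        simp only [mul_assoc]

variable [StarRing R]

omit [DecidableEq ι] in
lemma conj_mul_conj (X M N : Matrix ι ι R) :
    X * M * Xᴴ * (X * N * Xᴴ) = X * (M * (Xᴴ * X) * N) * Xᴴ := by
  simp only [mul_assoc]

lemma commute_conj_iff {X : Matrix ι ι R} (hX : IsUnit X) (M N : Matrix ι ι R) :
    Commute (X * M * Xᴴ) (X * N * Xᴴ) ↔ M * (Xᴴ * X) * N = N * (Xᴴ * X) * M := by
  rw [Commute, SemiconjBy, conj_mul_conj, conj_mul_conj]
  exact ⟨fun h => hX.mul_left_cancel (((isUnit_conjTranspose X).mpr hX).mul_right_cancel h),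
    fun h => by rw [h]⟩

def GammaCommuting (A B C : Matrix ι ι R) : Prop :=
  ∃ X : Matrix ι ι R, IsUnit X ∧ Commute (X * A * Xᴴ) (X * B * Xᴴ) ∧
    Commute (X * A * Xᴴ) (X * C * Xᴴ) ∧ Commute (X * B * Xᴴ) (X * C * Xᴴ)

namespace GammaCommuting

variable {A B C : Matrix ι ι R}

lemma comm₁₂ : GammaCommuting A B C ↔ GammaCommuting B A C :=
  have swap {A B C : Matrix ι ι R} : GammaCommuting A B C → GammaCommuting B A C :=
    fun ⟨X, hX, hAB, hAC, hBC⟩ => ⟨X, hX, hAB.symm, hBC, hAC⟩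
  ⟨swap, swap⟩

lemma mul_inv_mul_comm (hB : IsUnit B) (h : GammaCommuting A B C) :
    A * B⁻¹ * C = C * B⁻¹ * A := by
  obtain ⟨X, hX, hAB, hAC, hBC⟩ := h
  rw [commute_conj_iff hX] at hAB hAC hBC
  exact mul_inv_mul_comm_of_twisted_comm (((isUnit_conjTranspose X).mpr hX).mul hX) hB
    hAB hAC hBC.symm

lemma of_mul_inv_mul_comm {Q : Matrix ι ι R} (hQ : IsUnit Q) (hQB : Qᴴ * Q = B⁻¹)
    (hB : IsUnit B) (h : A * B⁻¹ * C = C * B⁻¹ * A) : GammaCommuting A B C := by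
  have hB' := (isUnit_iff_isUnit_det B).mp hB
  refine ⟨Q, hQ, ?_, ?_, ?_⟩ <;> rw [commute_conj_iff hQ, hQB]
  · rw [mul_assoc, nonsing_inv_mul B hB', mul_one, mul_nonsing_inv B hB', one_mul]
  · exact h
  · rw [mul_nonsing_inv B hB', one_mul, mul_assoc, nonsing_inv_mul B hB', mul_one]

end GammaCommuting

end Matrix

section Mpow

variable {n : ℕ} {A : Matrix (Fin n) (Fin n) ℂ}

lemma conjTranspose_mpow (A : Matrix (Fin n) (Fin n) ℂ) (t : ℝ) : (mpow A t)ᴴ = mpow A t :=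
  (cfc_predicate (fun x : ℝ => x ^ t) A).star_eq

lemma mpow_zero (hA : A.IsHermitian) : mpow A 0 = 1 := by
  simp only [mpow, Real.rpow_zero]
  exact cfc_const_one ℝ A hA

lemma mpow_one (hA : A.IsHermitian) : mpow A 1 = A := by
  simp only [mpow, Real.rpow_one]
  exact cfc_id' ℝ A hA

open scoped MatrixOrder in
lemma mpow_mul_mpow (hA : A.PosDef) (s t : ℝ) : mpow A s * mpow A t = mpow A (s + t) := by
  rw [mpow, mpow, mpow, ← cfc_mul _ _ A (A.finite_real_spectrum.continuousOn _)
    (A.finite_real_spectrum.continuousOn _)]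
  exact cfc_congr fun x hx => (Real.rpow_add (hA.isStrictlyPositive.spectrum_pos hx) s t).symm

lemma isUnit_mpow (hA : A.PosDef) (t : ℝ) : IsUnit (mpow A t) :=
  ⟨⟨mpow A t, mpow A (-t), by rw [mpow_mul_mpow hA, add_neg_cancel, mpow_zero hA.isHermitian],
    by rw [mpow_mul_mpow hA, neg_add_cancel, mpow_zero hA.isHermitian]⟩, rfl⟩

lemma mpow_neg_half_mul_self (hA : A.PosDef) :
    mpow A (-(1/2)) * mpow A (-(1/2)) = A⁻¹ := by
  have h : mpow A (-(1/2)) * mpow A (-(1/2)) * mpow A 1 = 1 := by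
    rw [mpow_mul_mpow hA, mpow_mul_mpow hA]
    norm_num [mpow_zero hA.isHermitian]
  rw [mpow_one hA.isHermitian] at h
  exact (inv_eq_left_inv h).symm

end Mpow

theorem Matrix.PosDef.gammaCommuting_iff {n : ℕ} {A B C : Matrix (Fin n) (Fin n) ℂ}
    (hB : B.PosDef) : GammaCommuting A B C ↔ A * B⁻¹ * C = C * B⁻¹ * A :=
  ⟨fun h => h.mul_inv_mul_comm hB.isUnit, .of_mul_inv_mul_comm (isUnit_mpow hB _)
    (by rw [conjTranspose_mpow, mpow_neg_half_mul_self hB]) hB.isUnit⟩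

theorem stmt_8_general {n : ℕ} (A B C : Matrix (Fin n) (Fin n) ℂ)
    (hA : A.PosDef) (hB : B.PosDef) :
    ((∃ X : Matrix (Fin n) (Fin n) ℂ, IsUnit X ∧
        (X * A * Xᴴ) * (X * B * Xᴴ) = (X * B * Xᴴ) * (X * A * Xᴴ) ∧
        (X * A * Xᴴ) * (X * C * Xᴴ) = (X * C * Xᴴ) * (X * A * Xᴴ) ∧
        (X * B * Xᴴ) * (X * C * Xᴴ) = (X * C * Xᴴ) * (X * B * Xᴴ)) ↔
      A * B⁻¹ * C = C * B⁻¹ * A) ∧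
    (A * B⁻¹ * C = C * B⁻¹ * A ↔
      (mpow A (-(1/2)) * B * mpow A (-(1/2))) * (mpow A (-(1/2)) * C * mpow A (-(1/2))) =
        (mpow A (-(1/2)) * C * mpow A (-(1/2))) * (mpow A (-(1/2)) * B * mpow A (-(1/2)))) := by
  have h12 : GammaCommuting A B C ↔ A * B⁻¹ * C = C * B⁻¹ * A := hB.gammaCommuting_iff
  refine ⟨h12, ?_⟩
  have h23 := commute_conj_iff (isUnit_mpow hA (-(1/2))) B C
  rw [conjTranspose_mpow, mpow_neg_half_mul_self hA] at h23
  rw [← h12, GammaCommuting.comm₁₂, hA.gammaCommuting_iff]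
  exact h23.symm

/-- Equivalent characterizations of Γ-commuting. -/
theorem stmt_8 {n : ℕ} (A B C : Matrix (Fin n) (Fin n) ℂ)
    (hA : A.PosDef) (hB : B.PosDef) (hC : C.PosDef) :
    ((∃ X : Matrix (Fin n) (Fin n) ℂ, IsUnit X ∧
        (X * A * Xᴴ) * (X * B * Xᴴ) = (X * B * Xᴴ) * (X * A * Xᴴ) ∧
        (X * A * Xᴴ) * (X * C * Xᴴ) = (X * C * Xᴴ) * (X * A * Xᴴ) ∧
        (X * B * Xᴴ) * (X * C * Xᴴ) = (X * C * Xᴴ) * (X * B * Xᴴ)) ↔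
      A * B⁻¹ * C = C * B⁻¹ * A) ∧
    (A * B⁻¹ * C = C * B⁻¹ * A ↔
      (mpow A (-(1/2)) * B * mpow A (-(1/2))) * (mpow A (-(1/2)) * C * mpow A (-(1/2))) =
        (mpow A (-(1/2)) * C * mpow A (-(1/2))) * (mpow A (-(1/2)) * B * mpow A (-(1/2)))) :=
  stmt_8_general A B C hA hB
end
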